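/- Let n ≥ 4 and let B = {x ∈ X^n : at most one coordinate of x equals 2}, i.e., the set of words of X^n whose associated binary part has at most one 1. Then |B| = n^2 and B has diameter exactly 4: any two elements of B are at Hamming distance at most 4, and some pair of elements of B is at Hamming distance exactly 4. -/

import Mathlib

/-- A ternary word has exactly one coordinate equal to 0 (the `*` symbol). -/
def exactlyOneStar {n : ℕ} (x : Fin n → Fin 3) : Prop :=
  (Finset.univ.filter (fun i => x i = 0)).card = 1

instance {n : ℕ} : DecidablePred (exactlyOneStar (n := n)) := fun x =>
  decidable_of_iff ((Finset.univ.filter (fun i => x i = 0)).card = 1) Iff.rfl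

/-- The set `B` of words of `Xⁿ` whose binary part has at most one 1, i.e.
ternary words with exactly one coordinate equal to 0 and at most one
coordinate equal to 2. -/
def ballB (n : ℕ) : Finset (Fin n → Fin 3) :=
  Finset.univ.filter (fun x =>
    exactlyOneStar x ∧ (Finset.univ.filter (fun i => x i = 2)).card ≤ 1)

/-!
A word of `B` is determined by the position `i` of its star and the position `j` of its
unique `2`, where `j = i` encodes the word without a `2`; so `(i, j) ↦ word` is a bijection
`Fin n × Fin n → B`. Two words of `B` both equal `1` outside their at most four special
positions, and words whose four special positions are distinct differ at all of them.
-/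

section Hamming

variable {ι β : Type*} [Fintype ι] [DecidableEq β]

theorem hammingDist_le_card_of_eqOn_compl {x y : ι → β} (s : Finset ι)
    (h : ∀ i ∉ s, x i = y i) : hammingDist x y ≤ s.card :=
  Finset.card_le_card fun i hi => by
    by_contra his
    exact (Finset.mem_filter.mp hi).2 (h i his)

theorem hammingDist_eq_card_of_ne_iff {x y : ι → β} (s : Finset ι)
    (h : ∀ i, x i ≠ y i ↔ i ∈ s) : hammingDist x y = s.card := by
  unfold hammingDist
  congr 1
  ext i
  simp [h]

end Hamming

section StarWord

variable {n : ℕ}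

/-- The word with its star at `i` and the binary 1 at `j`; for `j = i` the binary part is zero. -/
def starWord (i j : Fin n) : Fin n → Fin 3 :=
  fun k => if k = i then 0 else if k = j then 2 else 1

variable {i j k : Fin n}

theorem starWord_eq_zero_iff : starWord i j k = 0 ↔ k = i := by
  unfold starWord; split_ifs <;> simp_all

theorem starWord_eq_two_iff : starWord i j k = 2 ↔ k = j ∧ k ≠ i := by
  unfold starWord; split_ifs <;> simp_all

theorem starWord_of_ne (hi : k ≠ i) (hj : k ≠ j) : starWord i j k = 1 := by
  simp [starWord, hi, hj]

theorem eq_starWord {x : Fin n → Fin 3} (h0 : ∀ k, x k = 0 ↔ k = i)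
    (h2 : ∀ k, k ≠ i → (x k = 2 ↔ k = j)) : x = starWord i j := by
  funext k
  by_cases hki : k = i
  · rw [starWord, if_pos hki]
    exact (h0 k).mpr hki
  by_cases hkj : k = j
  · rw [starWord, if_neg hki, if_pos hkj]
    exact (h2 k hki).mpr hkj
  have hk0 : x k ≠ 0 := fun h => hki ((h0 k).mp h)
  have hk2 : x k ≠ 2 := fun h => hkj ((h2 k hki).mp h)
  rw [starWord_of_ne hki hkj]
  omega

theorem starWord_mem_ballB (i j : Fin n) : starWord i j ∈ ballB n := by
  have h0 : Finset.univ.filter (starWord i j · = 0) = {i} := by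
    ext k; simp [starWord_eq_zero_iff]
  have h2 : Finset.univ.filter (starWord i j · = 2) ⊆ {j} := fun k hk => by
    simp_all [starWord_eq_two_iff]
  rw [ballB, Finset.mem_filter, exactlyOneStar, h0]
  exact ⟨Finset.mem_univ _, Finset.card_singleton i, Finset.card_le_card h2⟩

theorem mem_ballB {x : Fin n → Fin 3} : x ∈ ballB n ↔ ∃ i j, starWord i j = x := by
  refine ⟨fun hx => ?_, fun ⟨i, j, hx⟩ => hx ▸ starWord_mem_ballB i j⟩
  rw [ballB, Finset.mem_filter, exactlyOneStar] at hx
  obtain ⟨-, hstar, htwo⟩ := hx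
  obtain ⟨i, hi⟩ := Finset.card_eq_one.mp hstar
  have h0 (k : Fin n) : x k = 0 ↔ k = i := by
    simpa using Finset.ext_iff.mp hi k
  obtain ⟨j, hj⟩ : ∃ j, ∀ k, k ≠ i → (x k = 2 ↔ k = j) := by
    rcases Nat.le_one_iff_eq_zero_or_eq_one.mp htwo with h | h
    · exact ⟨i, fun k hk => iff_of_false
        (Finset.filter_eq_empty_iff.mp (Finset.card_eq_zero.mp h) (Finset.mem_univ k)) hk⟩
    · obtain ⟨j, hj⟩ := Finset.card_eq_one.mp h
      exact ⟨j, fun k _ => by simpa using Finset.ext_iff.mp hj k⟩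
  exact ⟨i, j, (eq_starWord h0 hj).symm⟩

theorem starWord_injective :
    Function.Injective fun p : Fin n × Fin n => starWord p.1 p.2 := by
  have eq_of_ne {i j i' j' : Fin n} (h : starWord i j = starWord i' j') (hj : j ≠ i) :
      j = j' :=
    (starWord_eq_two_iff.mp (congrFun h j ▸ starWord_eq_two_iff.mpr ⟨rfl, hj⟩)).1
  rintro ⟨i, j⟩ ⟨i', j'⟩ (h : starWord i j = starWord i' j')
  obtain rfl : i = i' :=
    starWord_eq_zero_iff.mp (congrFun h i ▸ starWord_eq_zero_iff.mpr rfl)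
  by_cases hj : j = i
  · by_cases hj' : j' = i
    · rw [hj, hj']
    · exact absurd ((eq_of_ne h.symm hj').trans hj) hj'
  · rw [eq_of_ne h hj]

theorem ballB_eq_image (n : ℕ) :
    ballB n = Finset.univ.image fun p : Fin n × Fin n => starWord p.1 p.2 := by
  ext x
  simp [mem_ballB]

theorem card_ballB (n : ℕ) : (ballB n).card = n ^ 2 := by
  rw [ballB_eq_image, Finset.card_image_of_injective _ starWord_injective]
  simp [sq]

theorem starWord_apply_eq_of_notMem {i' j' : Fin n}
    (hk : k ∉ ({i, j, i', j'} : Finset (Fin n))) :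
    starWord i j k = starWord i' j' k := by
  simp only [Finset.mem_insert, Finset.mem_singleton, not_or] at hk
  rw [starWord_of_ne hk.1 hk.2.1, starWord_of_ne hk.2.2.1 hk.2.2.2]

theorem hammingDist_starWord_le (i j i' j' : Fin n) :
    hammingDist (starWord i j) (starWord i' j') ≤ 4 :=
  (hammingDist_le_card_of_eqOn_compl _ fun _ => starWord_apply_eq_of_notMem).trans
    Finset.card_le_four

theorem hammingDist_starWord_eq_four {a b c d : Fin n} (hab : a ≠ b) (hac : a ≠ c)
    (had : a ≠ d) (hbc : b ≠ c) (hbd : b ≠ d) (hcd : c ≠ d) :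
    hammingDist (starWord a b) (starWord c d) = 4 := by
  rw [hammingDist_eq_card_of_ne_iff {a, b, c, d}]
  · exact Finset.card_eq_four.mpr ⟨a, b, c, d, hab, hac, had, hbc, hbd, hcd, rfl⟩
  refine fun k => ⟨fun hk => by_contra fun hmem => hk (starWord_apply_eq_of_notMem hmem), ?_⟩
  simp only [Finset.mem_insert, Finset.mem_singleton]
  rintro (rfl | rfl | rfl | rfl) <;> simp [starWord, *, Ne.symm]

end StarWord

theorem ballB_card_and_diameter (n : ℕ) (hn : 4 ≤ n) :
    (ballB n).card = n ^ 2 ∧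
    (∀ x ∈ ballB n, ∀ y ∈ ballB n, hammingDist x y ≤ 4) ∧
    (∃ x ∈ ballB n, ∃ y ∈ ballB n, hammingDist x y = 4) := by
  refine ⟨card_ballB n, ?_, ?_⟩
  · rintro _ hx _ hy
    obtain ⟨i, j, rfl⟩ := mem_ballB.mp hx
    obtain ⟨i', j', rfl⟩ := mem_ballB.mp hy
    exact hammingDist_starWord_le i j i' j'
  · let a : Fin n := ⟨0, by omega⟩
    let b : Fin n := ⟨1, by omega⟩
    let c : Fin n := ⟨2, by omega⟩
    let d : Fin n := ⟨3, by omega⟩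
    refine ⟨_, starWord_mem_ballB a b, _, starWord_mem_ballB c d,
      hammingDist_starWord_eq_four ?_ ?_ ?_ ?_ ?_ ?_⟩ <;> simp [a, b, c, d, Fin.ext_iff]
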